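/- (Generalized two-parameter turning point theorem.) Let φ : ℝ² → E be a C^∞ two-parameter family and T, Y_1, …, Y_p : ℝ² → ℝ be C^∞ functions such that for every (λ, λ′) the point φ(λ, λ′) satisfies the first law with temperature T(λ, λ′) and potentials Y_i(λ, λ′), with T(0,0) > 0. Suppose (λ, λ′) = (0,0) is a turning point of the curve λ′ = 0: ∂(S∘φ)/∂λ and ∂(X^i∘φ)/∂λ vanish at (0,0) for all i. Suppose (∂/∂λ′)[(∂T/∂λ)·∂(S∘φ)/∂λ + Σ_{i=1}^p (∂Y_i/∂λ)·∂(X^i∘φ)/∂λ] evaluated at (0,0) is strictly positive. Finally, suppose there exist continuous maps ũ, ũ′ : ℝ² → E such that for all (λ, λ′) in a neighborhood of (0,0), λ·DS_{φ(λ,λ′)}(ũ(λ,λ′)) + λ′·DS_{φ(λ,λ′)}(ũ′(λ,λ′)) = ∂(S∘φ)/∂λ (λ,λ′), and similarly λ·DX^i(ũ) + λ′·DX^i(ũ′) = ∂(X^i∘φ)/∂λ for all i. Then there exists ε > 0 such that for all λ′ ∈ (0, ε), the vector u := (∂φ/∂λ)(0, λ′) − λ′·ũ′(0, λ′) satisfies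 DM_{φ(0,λ′)}(u) = DS_{φ(0,λ′)}(u) = DX^i_{φ(0,λ′)}(u) = 0 for all i and B_{φ(0,λ′)}(u,u) < 0; in particular φ(0, λ′) is thermodynamically unstable for all λ′ ∈ (0, ε). -/

import Mathlib

/-!
Differentiating the first law along `λ` gives
`B(∂_λ φ, w) = ∂_λ T · DS(w) + ∑ᵢ ∂_λ Yᵢ · DXⁱ(w)` for every `w`.
At `(0, λ')` put `u = ∂_λ φ - λ' ũ'`. The hypothesis on `ũ'` (with `λ = 0`) says exactly that
`DS(u) = DXⁱ(u) = 0`, hence `DM(u) = 0` and `B(∂_λ φ, u) = 0`; by symmetry of `B` this leaves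
`B(u, u) = λ'² B(ũ', ũ') - σ(0, λ')`, where `σ` is the bracket whose `λ'`-derivative is assumed
positive. The turning point makes `σ(0, 0) = 0`, so `σ(0, λ')` grows linearly in `λ'` and beats
the quadratic term for small `λ' > 0`.
-/

open Filter Topology

/-- The second Fréchet derivative of `f : E → ℝ` at `φ`, applied to `u`, `v`. -/
noncomputable def D2 {E : Type*} [NormedAddCommGroup E] [NormedSpace ℝ E]
    (f : E → ℝ) (φ u v : E) : ℝ :=
  fderiv ℝ (fderiv ℝ f) φ u v

/-- `φ` satisfies the first law with temperature `T` and potentials `Y i`: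
`DM_φ = T·DS_φ + ∑ i, Y i · DX^i_φ` as continuous linear functionals. -/
def FirstLaw {E : Type*} [NormedAddCommGroup E] [NormedSpace ℝ E] {p : ℕ}
    (M S : E → ℝ) (X : Fin p → E → ℝ) (φ : E) (T : ℝ) (Y : Fin p → ℝ) : Prop :=
  fderiv ℝ M φ = T • fderiv ℝ S φ + ∑ i, Y i • fderiv ℝ (X i) φ

/-- The canonical bilinear form
`B_φ(u,v) = D²M_φ(u,v) − T·D²S_φ(u,v) − ∑ i, Y i·D²X^i_φ(u,v)`. -/
noncomputable def Bform {E : Type*} [NormedAddCommGroup E] [NormedSpace ℝ E] {p : ℕ}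
    (M S : E → ℝ) (X : Fin p → E → ℝ) (φ : E) (T : ℝ) (Y : Fin p → ℝ) (u v : E) : ℝ :=
  D2 M φ u v - T * D2 S φ u v - ∑ i, Y i * D2 (X i) φ u v

section Pointwise

variable {E : Type*} [NormedAddCommGroup E] [NormedSpace ℝ E] {p : ℕ}
  {M S : E → ℝ} {X : Fin p → E → ℝ} {x : E} {T : ℝ} {Y : Fin p → ℝ}

theorem FirstLaw.fderiv_apply_eq_zero (h : FirstLaw M S X x T Y) {u : E}
    (hS : fderiv ℝ S x u = 0) (hX : ∀ i, fderiv ℝ (X i) x u = 0) : fderiv ℝ M x u = 0 := by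
  rw [h]
  simp [hS, hX]

noncomputable def bformCLM (M S : E → ℝ) (X : Fin p → E → ℝ) (x : E) (T : ℝ)
    (Y : Fin p → ℝ) : E →L[ℝ] E →L[ℝ] ℝ :=
  fderiv ℝ (fderiv ℝ M) x - T • fderiv ℝ (fderiv ℝ S) x -
    ∑ i, Y i • fderiv ℝ (fderiv ℝ (X i)) x

theorem bformCLM_apply (u v : E) : bformCLM M S X x T Y u v = Bform M S X x T Y u v := by
  simp [bformCLM, Bform, D2]

def IsUnstableDirection (M S : E → ℝ) (X : Fin p → E → ℝ) (x : E) (T : ℝ) (Y : Fin p → ℝ)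
    (u : E) : Prop :=
  fderiv ℝ M x u = 0 ∧ fderiv ℝ S x u = 0 ∧ (∀ i, fderiv ℝ (X i) x u = 0) ∧
    Bform M S X x T Y u u < 0

theorem Bform_comm (hM : ContDiffAt ℝ 2 M x) (hS : ContDiffAt ℝ 2 S x)
    (hX : ∀ i, ContDiffAt ℝ 2 (X i) x) (u v : E) :
    Bform M S X x T Y u v = Bform M S X x T Y v u := by
  simp only [Bform, D2, hM.isSymmSndFDerivAt (by simp) u v, hS.isSymmSndFDerivAt (by simp) u v,
    fun i => (hX i).isSymmSndFDerivAt (by simp) u v]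

theorem Bform_sub_smul_self (hM : ContDiffAt ℝ 2 M x) (hS : ContDiffAt ℝ 2 S x)
    (hX : ∀ i, ContDiffAt ℝ 2 (X i) x) {a b : E} {t : ℝ}
    (h : Bform M S X x T Y a (a - t • b) = 0) :
    Bform M S X x T Y (a - t • b) (a - t • b) =
      t ^ 2 * Bform M S X x T Y b b - t * Bform M S X x T Y a b := by
  calc Bform M S X x T Y (a - t • b) (a - t • b)
      = Bform M S X x T Y a (a - t • b) - t * Bform M S X x T Y b (a - t • b) := by
        simp [← bformCLM_apply]
    _ = -t * Bform M S X x T Y (a - t • b) b := by rw [h, Bform_comm hM hS hX b]; ring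
    _ = t ^ 2 * Bform M S X x T Y b b - t * Bform M S X x T Y a b := by
        simp [← bformCLM_apply]; ring

theorem continuous_Bform {α : Type*} [TopologicalSpace α] (hM : ContDiff ℝ 2 M)
    (hS : ContDiff ℝ 2 S) (hX : ∀ i, ContDiff ℝ 2 (X i)) {γ : α → E} {τ : α → ℝ}
    {υ : Fin p → α → ℝ} {w₁ w₂ : α → E} (hγ : Continuous γ) (hτ : Continuous τ)
    (hυ : ∀ i, Continuous (υ i)) (hw₁ : Continuous w₁) (hw₂ : Continuous w₂) :
    Continuous fun a => Bform M S X (γ a) (τ a) (fun i => υ i a) (w₁ a) (w₂ a) := by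
  have hD2 : ∀ f : E → ℝ, ContDiff ℝ 2 f → Continuous fun a => fderiv ℝ (fderiv ℝ f) (γ a) :=
    fun f hf => ((hf.fderiv_right (m := 1) le_rfl).continuous_fderiv one_ne_zero).comp hγ
  simp only [← bformCLM_apply, bformCLM]
  refine (((((hD2 M hM).sub (hτ.smul (hD2 S hS))).sub ?_).clm_apply hw₁).clm_apply hw₂)
  exact continuous_finsetSum _ fun i _ => (hυ i).smul (hD2 (X i) (hX i))

end Pointwise

theorem ContDiffAt.differentiableAt_fderiv {𝕜 E F : Type*} [NontriviallyNormedField 𝕜]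
    [NormedAddCommGroup E] [NormedSpace 𝕜 E] [NormedAddCommGroup F] [NormedSpace 𝕜 F]
    {f : E → F} {x : E} (hf : ContDiffAt 𝕜 2 f x) : DifferentiableAt 𝕜 (fderiv 𝕜 f) x :=
  (hf.fderiv_right (m := 1) le_rfl).differentiableAt one_ne_zero

theorem ContDiffAt.differentiableAt_fderiv_apply {𝕜 E F : Type*} [NontriviallyNormedField 𝕜]
    [NormedAddCommGroup E] [NormedSpace 𝕜 E] [NormedAddCommGroup F] [NormedSpace 𝕜 F]
    {f : E → F} {x : E} (hf : ContDiffAt 𝕜 2 f x) (v : E) :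
    DifferentiableAt 𝕜 (fun y => fderiv 𝕜 f y v) x :=
  hf.differentiableAt_fderiv.clm_apply (differentiableAt_const v)

section Family

variable {E F : Type*} [NormedAddCommGroup E] [NormedSpace ℝ E] [NormedAddCommGroup F]
  [NormedSpace ℝ F] {p : ℕ} {M S : E → ℝ} {X : Fin p → E → ℝ} {φ : F → E} {T : F → ℝ}
  {Y : Fin p → F → ℝ} {q : F}

theorem fderiv_apply_fderiv_sub_smul_eq_zero {f : E → ℝ} (hf : DifferentiableAt ℝ f (φ q))
    (hφ : DifferentiableAt ℝ φ q) {e : F} {b : E} {t : ℝ}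
    (h : t * fderiv ℝ f (φ q) b = fderiv ℝ (f ∘ φ) q e) :
    fderiv ℝ f (φ q) (fderiv ℝ φ q e - t • b) = 0 := by
  rw [map_sub, map_smul, smul_eq_mul, h, fderiv_comp q hf hφ]
  simp

/-- The first law differentiated along the family. -/
theorem Bform_fderiv_apply (hfl : ∀ q, FirstLaw M S X (φ q) (T q) (fun i => Y i q))
    (hM : DifferentiableAt ℝ (fderiv ℝ M) (φ q)) (hS : DifferentiableAt ℝ (fderiv ℝ S) (φ q))
    (hX : ∀ i, DifferentiableAt ℝ (fderiv ℝ (X i)) (φ q)) (hφ : DifferentiableAt ℝ φ q)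
    (hT : DifferentiableAt ℝ T q) (hY : ∀ i, DifferentiableAt ℝ (Y i) q) (e : F) (w : E) :
    Bform M S X (φ q) (T q) (fun i => Y i q) (fderiv ℝ φ q e) w =
      fderiv ℝ T q e * fderiv ℝ S (φ q) w +
        ∑ i, fderiv ℝ (Y i) q e * fderiv ℝ (X i) (φ q) w := by
  have hlhs : HasFDerivAt (fun q => fderiv ℝ M (φ q))
      ((fderiv ℝ (fderiv ℝ M) (φ q)).comp (fderiv ℝ φ q)) q :=
    hM.hasFDerivAt.comp q hφ.hasFDerivAt
  have hrhs : HasFDerivAt (fun q => fderiv ℝ M (φ q))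
      ((T q • (fderiv ℝ (fderiv ℝ S) (φ q)).comp (fderiv ℝ φ q) +
          (fderiv ℝ T q).smulRight (fderiv ℝ S (φ q))) +
        ∑ i, (Y i q • (fderiv ℝ (fderiv ℝ (X i)) (φ q)).comp (fderiv ℝ φ q) +
          (fderiv ℝ (Y i) q).smulRight (fderiv ℝ (X i) (φ q)))) q := by
    rw [show (fun q => fderiv ℝ M (φ q)) = _ from funext hfl]
    exact (hT.hasFDerivAt.smul (hS.hasFDerivAt.comp q hφ.hasFDerivAt)).add
      (HasFDerivAt.fun_sum fun i _ =>
        (hY i).hasFDerivAt.smul ((hX i).hasFDerivAt.comp q hφ.hasFDerivAt))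
  have h := congrArg (fun L : F →L[ℝ] E →L[ℝ] ℝ => L e w) (hlhs.unique hrhs)
  simp only [add_apply, smul_apply, ContinuousLinearMap.comp_apply,
    ContinuousLinearMap.smulRight_apply, FunLike.coe_sum, Finset.sum_apply, smul_eq_mul] at h
  simp only [Bform, D2, h, Finset.sum_add_distrib]
  ring

theorem Bform_fderiv_sub_smul_self (hfl : ∀ q, FirstLaw M S X (φ q) (T q) (fun i => Y i q))
    (hM : ContDiffAt ℝ 2 M (φ q)) (hS : ContDiffAt ℝ 2 S (φ q))
    (hX : ∀ i, ContDiffAt ℝ 2 (X i) (φ q)) (hφ : DifferentiableAt ℝ φ q)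
    (hT : DifferentiableAt ℝ T q) (hY : ∀ i, DifferentiableAt ℝ (Y i) q) {e : F} {b : E} {t : ℝ}
    (hSb : t * fderiv ℝ S (φ q) b = fderiv ℝ (S ∘ φ) q e)
    (hXb : ∀ i, t * fderiv ℝ (X i) (φ q) b = fderiv ℝ (X i ∘ φ) q e) :
    Bform M S X (φ q) (T q) (fun i => Y i q) (fderiv ℝ φ q e - t • b)
        (fderiv ℝ φ q e - t • b) =
      t ^ 2 * Bform M S X (φ q) (T q) (fun i => Y i q) b b -
        (fderiv ℝ T q e * fderiv ℝ (S ∘ φ) q e +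
          ∑ i, fderiv ℝ (Y i) q e * fderiv ℝ (X i ∘ φ) q e) := by
  have hBform := Bform_fderiv_apply hfl hM.differentiableAt_fderiv hS.differentiableAt_fderiv
    (fun i => (hX i).differentiableAt_fderiv) hφ hT hY e
  have hS0 := fderiv_apply_fderiv_sub_smul_eq_zero (hS.differentiableAt two_ne_zero) hφ hSb
  have hX0 := fun i =>
    fderiv_apply_fderiv_sub_smul_eq_zero ((hX i).differentiableAt two_ne_zero) hφ (hXb i)
  rw [Bform_sub_smul_self hM hS hX (by simp [hBform, hS0, hX0]), hBform]
  simp only [← hSb, ← hXb, mul_add, Finset.mul_sum, mul_left_comm t]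

theorem isUnstableDirection_fderiv_sub_smul
    (hfl : ∀ q, FirstLaw M S X (φ q) (T q) (fun i => Y i q))
    (hM : ContDiffAt ℝ 2 M (φ q)) (hS : ContDiffAt ℝ 2 S (φ q))
    (hX : ∀ i, ContDiffAt ℝ 2 (X i) (φ q)) (hφ : DifferentiableAt ℝ φ q)
    (hT : DifferentiableAt ℝ T q) (hY : ∀ i, DifferentiableAt ℝ (Y i) q) {e : F} {b : E} {t : ℝ}
    (hSb : t * fderiv ℝ S (φ q) b = fderiv ℝ (S ∘ φ) q e)
    (hXb : ∀ i, t * fderiv ℝ (X i) (φ q) b = fderiv ℝ (X i ∘ φ) q e)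
    (hlt : t ^ 2 * Bform M S X (φ q) (T q) (fun i => Y i q) b b <
      fderiv ℝ T q e * fderiv ℝ (S ∘ φ) q e +
        ∑ i, fderiv ℝ (Y i) q e * fderiv ℝ (X i ∘ φ) q e) :
    IsUnstableDirection M S X (φ q) (T q) (fun i => Y i q) (fderiv ℝ φ q e - t • b) := by
  have hS0 := fderiv_apply_fderiv_sub_smul_eq_zero (hS.differentiableAt two_ne_zero) hφ hSb
  have hX0 := fun i =>
    fderiv_apply_fderiv_sub_smul_eq_zero ((hX i).differentiableAt two_ne_zero) hφ (hXb i)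
  refine ⟨(hfl q).fderiv_apply_eq_zero hS0 hX0, hS0, hX0, ?_⟩
  rw [Bform_fderiv_sub_smul_self hfl hM hS hX hφ hT hY hSb hXb]
  exact sub_neg.mpr hlt

end Family

theorem eventually_sq_mul_lt_of_hasDerivAt {σ g : ℝ → ℝ} {c : ℝ} (hσ : HasDerivAt σ c 0)
    (hσ0 : σ 0 = 0) (hc : 0 < c) (hg : ContinuousAt g 0) :
    ∀ᶠ t in 𝓝[>] 0, t ^ 2 * g t < σ t := by
  have hlim : Tendsto (fun t => slope σ 0 t - t * g t) (𝓝[>] 0) (𝓝 (c - 0 * g 0)) :=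
    ((hasDerivAt_iff_tendsto_slope.mp hσ).mono_left (nhdsGT_le_nhdsNE 0)).sub
      ((continuousAt_id.mul hg).tendsto.mono_left nhdsWithin_le_nhds)
  filter_upwards [hlim.eventually (eventually_gt_nhds (by simpa using hc)), self_mem_nhdsWithin]
    with t hpos (ht : 0 < t)
  have hσt : σ t = t * slope σ 0 t := by
    rw [slope_def_field, hσ0, sub_zero, sub_zero, mul_div_cancel₀ _ ht.ne']
  nlinarith [mul_pos ht hpos]

theorem turning_point_theorem_two_parameter_general
    {E : Type*} [NormedAddCommGroup E] [NormedSpace ℝ E]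
    {p : ℕ} (M S : E → ℝ) (X : Fin p → E → ℝ)
    (hM : ContDiff ℝ (⊤ : ℕ∞) M) (hS : ContDiff ℝ (⊤ : ℕ∞) S)
    (hX : ∀ i, ContDiff ℝ (⊤ : ℕ∞) (X i))
    (φ : ℝ × ℝ → E) (hφ : ContDiff ℝ (⊤ : ℕ∞) φ)
    (T : ℝ × ℝ → ℝ) (Y : Fin p → ℝ × ℝ → ℝ)
    (hT : ContDiff ℝ (⊤ : ℕ∞) T) (hY : ∀ i, ContDiff ℝ (⊤ : ℕ∞) (Y i))
    (hfl : ∀ q : ℝ × ℝ, FirstLaw M S X (φ q) (T q) (fun i => Y i q))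
    (hturnS : fderiv ℝ (S ∘ φ) (0, 0) (1, 0) = 0)
    (hturnX : ∀ i, fderiv ℝ (X i ∘ φ) (0, 0) (1, 0) = 0)
    (hσ : 0 < fderiv ℝ (fun q =>
      fderiv ℝ T q (1, 0) * fderiv ℝ (S ∘ φ) q (1, 0) +
        ∑ i, fderiv ℝ (Y i) q (1, 0) * fderiv ℝ (X i ∘ φ) q (1, 0)) (0, 0) (0, 1))
    (u' v' : ℝ × ℝ → E) (hv'cont : Continuous v')
    (huv' : ∀ᶠ q in 𝓝 ((0, 0) : ℝ × ℝ),
      (q.1 * fderiv ℝ S (φ q) (u' q) + q.2 * fderiv ℝ S (φ q) (v' q)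
          = fderiv ℝ (S ∘ φ) q (1, 0)) ∧
      ∀ i, q.1 * fderiv ℝ (X i) (φ q) (u' q) + q.2 * fderiv ℝ (X i) (φ q) (v' q)
          = fderiv ℝ (X i ∘ φ) q (1, 0)) :
    ∃ ε > 0, ∀ l' ∈ Set.Ioo (0 : ℝ) ε,
      fderiv ℝ M (φ (0, l')) (fderiv ℝ φ (0, l') (1, 0) - l' • v' (0, l')) = 0 ∧
      fderiv ℝ S (φ (0, l')) (fderiv ℝ φ (0, l') (1, 0) - l' • v' (0, l')) = 0 ∧
      (∀ i, fderiv ℝ (X i) (φ (0, l')) (fderiv ℝ φ (0, l') (1, 0) - l' • v' (0, l')) = 0) ∧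
      Bform M S X (φ (0, l')) (T (0, l')) (fun i => Y i (0, l'))
        (fderiv ℝ φ (0, l') (1, 0) - l' • v' (0, l'))
        (fderiv ℝ φ (0, l') (1, 0) - l' • v' (0, l')) < 0 := by
  have h2 : (2 : WithTop ℕ∞) ≤ ((⊤ : ℕ∞) : WithTop ℕ∞) :=
    WithTop.coe_le_coe.mpr le_top
  replace hM := hM.of_le h2
  replace hS := hS.of_le h2
  replace hX := fun i => (hX i).of_le h2
  replace hφ := hφ.of_le h2
  replace hT := hT.of_le h2
  replace hY := fun i => (hY i).of_le h2
  set σ : ℝ × ℝ → ℝ := fun q => fderiv ℝ T q (1, 0) * fderiv ℝ (S ∘ φ) q (1, 0) +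
    ∑ i, fderiv ℝ (Y i) q (1, 0) * fderiv ℝ (X i ∘ φ) q (1, 0)
  have hline : Continuous fun t : ℝ => ((0 : ℝ), t) := continuous_const.prodMk continuous_id
  have hσ_diff : DifferentiableAt ℝ σ (0, 0) :=
    ((hT.contDiffAt.differentiableAt_fderiv_apply _).mul
        ((hS.comp hφ).contDiffAt.differentiableAt_fderiv_apply _)).add
      (DifferentiableAt.fun_sum fun i _ => ((hY i).contDiffAt.differentiableAt_fderiv_apply _).mul
        (((hX i).comp hφ).contDiffAt.differentiableAt_fderiv_apply _))
  have hσ_line : HasDerivAt (fun t => σ (0, t)) (fderiv ℝ σ (0, 0) (0, 1)) 0 :=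
    hσ_diff.hasFDerivAt.comp_hasDerivAt 0 ((hasDerivAt_const _ _).prodMk (hasDerivAt_id 0))
  have hB_cont := continuous_Bform hM hS hX (hφ.continuous.comp hline)
    (hT.continuous.comp hline) (fun i => (hY i).continuous.comp hline)
    (hv'cont.comp hline) (hv'cont.comp hline)
  have hev := (eventually_sq_mul_lt_of_hasDerivAt hσ_line (by simp [σ, hturnS, hturnX]) hσ
    hB_cont.continuousAt).and ((hline.tendsto' 0 _ rfl).eventually huv' |>.filter_mono
      nhdsWithin_le_nhds)
  obtain ⟨ε, hε, hball⟩ := (nhdsGT_basis (0 : ℝ)).eventually_iff.mp hev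
  refine ⟨ε, hε, fun t ht => ?_⟩
  obtain ⟨hlt, hSrel, hXrel⟩ := hball ht
  simp only [zero_mul, zero_add] at hSrel hXrel
  exact isUnstableDirection_fderiv_sub_smul hfl hM.contDiffAt hS.contDiffAt
    (fun i => (hX i).contDiffAt) (hφ.differentiable two_ne_zero _)
    (hT.differentiable two_ne_zero _) (fun i => (hY i).differentiable two_ne_zero _)
    hSrel hXrel hlt

/-- Generalized two-parameter turning point theorem: for a smooth two-parameter
family of first-law solutions with a turning point of the curve `λ′ = 0` at the origin and
positive cross derivative `∂/∂λ′ [∂T/∂λ · ∂(S∘φ)/∂λ + ∑ᵢ ∂Yᵢ/∂λ · ∂(Xⁱ∘φ)/∂λ]` at `(0,0)`,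
the solutions `φ(0, λ′)` are thermodynamically unstable for all small `λ′ > 0`. -/
theorem turning_point_theorem_two_parameter
    {E : Type*} [NormedAddCommGroup E] [NormedSpace ℝ E] [CompleteSpace E]
    {p : ℕ} (M S : E → ℝ) (X : Fin p → E → ℝ)
    (hM : ContDiff ℝ (⊤ : ℕ∞) M) (hS : ContDiff ℝ (⊤ : ℕ∞) S)
    (hX : ∀ i, ContDiff ℝ (⊤ : ℕ∞) (X i))
    (φ : ℝ × ℝ → E) (hφ : ContDiff ℝ (⊤ : ℕ∞) φ)
    (T : ℝ × ℝ → ℝ) (Y : Fin p → ℝ × ℝ → ℝ)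
    (hT : ContDiff ℝ (⊤ : ℕ∞) T) (hY : ∀ i, ContDiff ℝ (⊤ : ℕ∞) (Y i))
    (hfl : ∀ q : ℝ × ℝ, FirstLaw M S X (φ q) (T q) (fun i => Y i q))
    (hT0 : 0 < T (0, 0))
    (hturnS : fderiv ℝ (S ∘ φ) (0, 0) (1, 0) = 0)
    (hturnX : ∀ i, fderiv ℝ (X i ∘ φ) (0, 0) (1, 0) = 0)
    (hσ : 0 < fderiv ℝ (fun q =>
      fderiv ℝ T q (1, 0) * fderiv ℝ (S ∘ φ) q (1, 0) +
        ∑ i, fderiv ℝ (Y i) q (1, 0) * fderiv ℝ (X i ∘ φ) q (1, 0)) (0, 0) (0, 1))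
    (u' v' : ℝ × ℝ → E) (hu'cont : Continuous u') (hv'cont : Continuous v')
    (huv' : ∀ᶠ q in 𝓝 ((0, 0) : ℝ × ℝ),
      (q.1 * fderiv ℝ S (φ q) (u' q) + q.2 * fderiv ℝ S (φ q) (v' q)
          = fderiv ℝ (S ∘ φ) q (1, 0)) ∧
      ∀ i, q.1 * fderiv ℝ (X i) (φ q) (u' q) + q.2 * fderiv ℝ (X i) (φ q) (v' q)
          = fderiv ℝ (X i ∘ φ) q (1, 0)) :
    ∃ ε > 0, ∀ l' ∈ Set.Ioo (0 : ℝ) ε,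
      fderiv ℝ M (φ (0, l')) (fderiv ℝ φ (0, l') (1, 0) - l' • v' (0, l')) = 0 ∧
      fderiv ℝ S (φ (0, l')) (fderiv ℝ φ (0, l') (1, 0) - l' • v' (0, l')) = 0 ∧
      (∀ i, fderiv ℝ (X i) (φ (0, l')) (fderiv ℝ φ (0, l') (1, 0) - l' • v' (0, l')) = 0) ∧
      Bform M S X (φ (0, l')) (T (0, l')) (fun i => Y i (0, l'))
        (fderiv ℝ φ (0, l') (1, 0) - l' • v' (0, l'))
        (fderiv ℝ φ (0, l') (1, 0) - l' • v' (0, l')) < 0 :=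
  turning_point_theorem_two_parameter_general M S X hM hS hX φ hφ T Y hT hY hfl hturnS hturnX hσ u'
    v' hv'cont huv'
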